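/- arXiv:2209.09162 — 2 statements merged into one kernel-verified Lean document; each statement's English description precedes it below -/
import Mathlib

section
/- Let H ∈ (0,1), β ∈ ℝ, σ > 0, and 0 ≤ s ≤ t ≤ 1. Then V_{H,β,σ}(s,t) ≤ e^{3|β|} · σ² · (t−s)^{2H}. -/
open MeasureTheory Real

/-! Both integrals in `fouVar` are bounded by pulling out `sup_{[0,t-s]} e^{±βz} ≤ e^{|β|}` and
integrating `z^(2H-1)` exactly, which gives `e^{|β|} (t-s)^(2H) / (2H)`; the prefactors
`e^{-2βt}`, `e^{-2βs}` are at most `e^{2|β|}` because `s, t ∈ [0,1]`, and the factor `H / (2H)`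
of each of the two summands is `1/2`. -/

/-- The increment variance of the fractional Ornstein–Uhlenbeck process:
`V_{H,β,σ}(s,t) = σ² H e^(-2βt) ∫₀^(t-s) z^(2H-1) e^(βz) dz
                + σ² H e^(-2βs) ∫₀^(t-s) z^(2H-1) e^(-βz) dz`. -/
noncomputable def fouVar (H β σ s t : ℝ) : ℝ :=
  σ ^ 2 * H * Real.exp (-(2 * β * t)) *
      (∫ z in (0:ℝ)..(t - s), z ^ (2 * H - 1) * Real.exp (β * z)) +
    σ ^ 2 * H * Real.exp (-(2 * β * s)) *
      (∫ z in (0:ℝ)..(t - s), z ^ (2 * H - 1) * Real.exp (-(β * z)))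

lemma exp_mul_le_exp_abs {c x : ℝ} (hx₀ : 0 ≤ x) (hx₁ : x ≤ 1) : exp (c * x) ≤ exp |c| := by
  refine exp_le_exp.2 ?_
  calc c * x ≤ |c| * x := mul_le_mul_of_nonneg_right (le_abs_self c) hx₀
    _ ≤ |c| := mul_le_of_le_one_right (abs_nonneg c) hx₁

lemma intervalIntegral_rpow_mul_exp_nonneg {r c a : ℝ} (ha : 0 ≤ a) :
    0 ≤ ∫ z in (0:ℝ)..a, z ^ r * exp (c * z) :=
  intervalIntegral.integral_nonneg ha fun _ hz => mul_nonneg (rpow_nonneg hz.1 r) (exp_pos _).le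

lemma intervalIntegral_rpow_mul_exp_le {r c a : ℝ} (hr : -1 < r) (ha₀ : 0 ≤ a) (ha₁ : a ≤ 1) :
    ∫ z in (0:ℝ)..a, z ^ r * exp (c * z) ≤ exp |c| * (a ^ (r + 1) / (r + 1)) := by
  have hpow : IntervalIntegrable (fun z : ℝ => z ^ r) volume 0 a :=
    intervalIntegral.intervalIntegrable_rpow' hr
  calc ∫ z in (0:ℝ)..a, z ^ r * exp (c * z)
      ≤ ∫ z in (0:ℝ)..a, exp |c| * z ^ r := by
        refine intervalIntegral.integral_mono_on ha₀
          (hpow.mul_continuousOn (by fun_prop)) (hpow.const_mul _) fun z hz => ?_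
        rw [mul_comm]
        exact mul_le_mul_of_nonneg_right (exp_mul_le_exp_abs hz.1 (hz.2.trans ha₁))
          (rpow_nonneg hz.1 r)
    _ = exp |c| * (a ^ (r + 1) / (r + 1)) := by
        rw [intervalIntegral.integral_const_mul, integral_rpow (Or.inl hr),
          zero_rpow (by linarith), sub_zero]

theorem fouVar_upper_general (H β σ s t : ℝ) (hH : H ∈ Set.Ioo (0:ℝ) 1)
    (hs : 0 ≤ s) (hst : s ≤ t) (ht : t ≤ 1) :
    fouVar H β σ s t ≤ Real.exp (3 * |β|) * σ ^ 2 * (t - s) ^ (2 * H) := by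
  obtain ⟨hH₀, -⟩ := hH
  have ha₀ : 0 ≤ t - s := sub_nonneg.2 hst
  have ha₁ : t - s ≤ 1 := by linarith
  have hr : -1 < 2 * H - 1 := by linarith
  have hI₁ := intervalIntegral_rpow_mul_exp_le (c := β) hr ha₀ ha₁
  have hI₂ := intervalIntegral_rpow_mul_exp_le (c := -β) hr ha₀ ha₁
  simp only [neg_mul, abs_neg, sub_add_cancel] at hI₁ hI₂
  have hwt : exp (-(2 * β * t)) ≤ exp (2 * |β|) := by
    simpa [neg_mul, abs_mul] using exp_mul_le_exp_abs (c := -(2 * β)) (hs.trans hst) ht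
  have hws : exp (-(2 * β * s)) ≤ exp (2 * |β|) := by
    simpa [neg_mul, abs_mul] using exp_mul_le_exp_abs (c := -(2 * β)) hs (hst.trans ht)
  have hI₁₀ := intervalIntegral_rpow_mul_exp_nonneg (r := 2 * H - 1) (c := β) ha₀
  have hI₂₀ := intervalIntegral_rpow_mul_exp_nonneg (r := 2 * H - 1) (c := -β) ha₀
  simp only [neg_mul] at hI₂₀
  calc fouVar H β σ s t
      ≤ σ ^ 2 * H * exp (2 * |β|) * (exp |β| * ((t - s) ^ (2 * H) / (2 * H))) +
        σ ^ 2 * H * exp (2 * |β|) * (exp |β| * ((t - s) ^ (2 * H) / (2 * H))) := by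
        unfold fouVar; gcongr
    _ = exp (3 * |β|) * σ ^ 2 * (t - s) ^ (2 * H) := by
        rw [show 3 * |β| = 2 * |β| + |β| by ring, exp_add]
        field_simp
        ring

/-- For `H ∈ (0,1)`, `β ∈ ℝ`, `σ > 0` and `0 ≤ s ≤ t ≤ 1`,
`V_{H,β,σ}(s,t) ≤ e^(3|β|) σ² (t-s)^(2H)`. -/
theorem fouVar_upper (H β σ s t : ℝ) (hH : H ∈ Set.Ioo (0:ℝ) 1) (hσ : 0 < σ)
    (hs : 0 ≤ s) (hst : s ≤ t) (ht : t ≤ 1) :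
    fouVar H β σ s t ≤ Real.exp (3 * |β|) * σ ^ 2 * (t - s) ^ (2 * H) :=
  fouVar_upper_general H β σ s t hH hs hst ht
end

section
/- Let H ∈ (0,1), β ∈ ℝ with |β| ≤ 1, σ > 0, and 0 ≤ s ≤ t ≤ 1. Then V_{H,β,σ}(s,t) ≥ σ² · e^{−2|β|} · (t−s)^{2H}. -/
/-!
Absorb each prefactor `e^(-2βt)`, `e^(-2βs)` into the integrand: on `[0, t - s]` the exponents
become `β (z - 2t)` and `-β (z + 2s)`, with `|z - 2t|, |z + 2s| ≤ 2` since `0 ≤ s ≤ t ≤ 1`.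
Hence both exponential factors are at least `e^(-2|β|)`, and `∫₀^u z^(2H-1) dz = u^(2H) / (2H)`
turns the two integrals into `2 e^(-2|β|) (t-s)^(2H) / (2H)`, which the factor `σ² H` brings to
the claimed bound.
-/

open MeasureTheory Real

theorem mul_div_le_integral_rpow_mul {r u c : ℝ} {g : ℝ → ℝ} (hr : -1 < r) (hu : 0 ≤ u)
    (hg : ContinuousOn g (Set.Icc 0 u)) (hcg : ∀ z ∈ Set.Icc 0 u, c ≤ g z) :
    c * (u ^ (r + 1) / (r + 1)) ≤ ∫ z in (0:ℝ)..u, z ^ r * g z := by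
  have hrpow : IntervalIntegrable (fun z : ℝ => z ^ r) volume 0 u :=
    intervalIntegral.intervalIntegrable_rpow' hr
  have hconst : ∫ z in (0:ℝ)..u, c * z ^ r = c * (u ^ (r + 1) / (r + 1)) := by
    rw [intervalIntegral.integral_const_mul, integral_rpow (Or.inl hr),
      zero_rpow (by linarith), sub_zero]
  rw [← hconst]
  refine intervalIntegral.integral_mono_on hu (hrpow.const_mul c)
    (hrpow.mul_continuousOn (by rwa [Set.uIcc_of_le hu])) fun z hz => ?_
  rw [mul_comm]
  exact mul_le_mul_of_nonneg_left (hcg z hz) (rpow_nonneg hz.1 r)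

theorem exp_neg_mul_abs_le_exp_mul {β x a : ℝ} (hx : |x| ≤ a) :
    exp (-(a * |β|)) ≤ exp (β * x) := by
  have h := neg_abs_le (β * x)
  rw [abs_mul] at h
  gcongr
  nlinarith [abs_nonneg β]

theorem exp_mul_div_le_integral_rpow_mul_exp {r u a β : ℝ} {f : ℝ → ℝ} (hr : -1 < r)
    (hu : 0 ≤ u) (hf : Continuous f) (hfa : ∀ z ∈ Set.Icc 0 u, |f z| ≤ a) :
    exp (-(a * |β|)) * (u ^ (r + 1) / (r + 1)) ≤ ∫ z in (0:ℝ)..u, z ^ r * exp (β * f z) :=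
  mul_div_le_integral_rpow_mul hr hu (by fun_prop)
    fun z hz => exp_neg_mul_abs_le_exp_mul (hfa z hz)

theorem fouVar_eq (H β σ s t : ℝ) :
    fouVar H β σ s t = σ ^ 2 * H *
      ((∫ z in (0:ℝ)..(t - s), z ^ (2 * H - 1) * exp (β * (z - 2 * t))) +
        ∫ z in (0:ℝ)..(t - s), z ^ (2 * H - 1) * exp (β * -(z + 2 * s))) := by
  simp only [fouVar, mul_add, ← intervalIntegral.integral_const_mul]
  congr 1 <;> refine intervalIntegral.integral_congr fun z _ => ?_
  · rw [show β * (z - 2 * t) = -(2 * β * t) + β * z by ring, exp_add]; ring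
  · rw [show β * -(z + 2 * s) = -(2 * β * s) + -(β * z) by ring, exp_add]; ring

theorem fouVar_lower_general (H β σ s t : ℝ) (hH : H ∈ Set.Ioo (0:ℝ) 1)
    (hs : 0 ≤ s) (hst : s ≤ t) (ht : t ≤ 1) :
    σ ^ 2 * Real.exp (-(2 * |β|)) * (t - s) ^ (2 * H) ≤ fouVar H β σ s t := by
  have hH0 : 0 < H := hH.1
  have hr : -1 < 2 * H - 1 := by linarith
  have hu : 0 ≤ t - s := sub_nonneg.mpr hst
  have lower (f : ℝ → ℝ) (hf : Continuous f) (hf2 : ∀ z ∈ Set.Icc 0 (t - s), |f z| ≤ 2) :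
      exp (-(2 * |β|)) * ((t - s) ^ (2 * H) / (2 * H)) ≤
        ∫ z in (0:ℝ)..(t - s), z ^ (2 * H - 1) * exp (β * f z) := by
    simpa only [sub_add_cancel] using exp_mul_div_le_integral_rpow_mul_exp hr hu hf hf2
  have hterm_t := lower (fun z => z - 2 * t) (by fun_prop) fun z hz => by
    rw [abs_le]; constructor <;> linarith [hz.1, hz.2]
  have hterm_s := lower (fun z => -(z + 2 * s)) (by fun_prop) fun z hz => by
    rw [abs_le]; constructor <;> linarith [hz.1, hz.2]
  rw [fouVar_eq]
  calc σ ^ 2 * exp (-(2 * |β|)) * (t - s) ^ (2 * H)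
      = σ ^ 2 * H * (2 * (exp (-(2 * |β|)) * ((t - s) ^ (2 * H) / (2 * H)))) := by
        field_simp
    _ ≤ _ := by gcongr; linarith

/-- For `H ∈ (0,1)`, `|β| ≤ 1`, `σ > 0` and `0 ≤ s ≤ t ≤ 1`,
`V_{H,β,σ}(s,t) ≥ σ² e^(-2|β|) (t-s)^(2H)`. -/
theorem fouVar_lower (H β σ s t : ℝ) (hH : H ∈ Set.Ioo (0:ℝ) 1) (hβ : |β| ≤ 1)
    (hσ : 0 < σ) (hs : 0 ≤ s) (hst : s ≤ t) (ht : t ≤ 1) :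
    σ ^ 2 * Real.exp (-(2 * |β|)) * (t - s) ^ (2 * H) ≤ fouVar H β σ s t :=
  fouVar_lower_general H β σ s t hH hs hst ht
end
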